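/- Let (W,S) be a finite Coxeter system and R its family of R-polynomials. For all u ≤ w in Bruhat order with ℓ(u,w) = n ≥ 1: 1 ≤ R_{u,w}(2) ≤ d_n(1) and n ≤ R′_{u,w}(2) ≤ d_n′(1), where R′ denotes the derivative. Moreover the bounds are given by Jacobsthal-type numbers: 3·d_n(1) = 2^n − (−1)^n (so d_n(1) = J_n, the n-th Jacobsthal number defined by J₀ = 0, J₁ = 1, J_n = J_{n−1} + 2J_{n−2}), and 9·d_n′(1) = 2·(2^n − (−1)^n) + 3n·2^{n−1}. -/

import Mathlib

open Polynomial

/-- A Bruhat edge `u → v`: `v = u * t` for some reflection `t`, and `ℓ(u) < ℓ(v)`. -/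
def BruhatEdge {B W : Type*} [Group W] {M : CoxeterMatrix B}
    (cs : CoxeterSystem M W) (u v : W) : Prop :=
  ∃ t : W, cs.IsReflection t ∧ v = u * t ∧ cs.length u < cs.length v

/-- Bruhat order: the reflexive-transitive closure of the Bruhat edge relation. -/
def BruhatLE {B W : Type*} [Group W] {M : CoxeterMatrix B}
    (cs : CoxeterSystem M W) : W → W → Prop :=
  Relation.ReflTransGen (BruhatEdge cs)

/-- The defining properties of the family of `R`-polynomials. -/
def IsRFamily {B W : Type*} [Group W] {M : CoxeterMatrix B}
    (cs : CoxeterSystem M W) (R : W → W → Polynomial ℤ) : Prop :=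
  (∀ u w, ¬ BruhatLE cs u w → R u w = 0) ∧
  (∀ w, R w w = 1) ∧
  (∀ u w, ∀ i : B, cs.length (w * cs.simple i) < cs.length w →
    (cs.length (u * cs.simple i) < cs.length u →
      R u w = R (u * cs.simple i) (w * cs.simple i)) ∧
    (cs.length u < cs.length (u * cs.simple i) →
      R u w = (X - 1) * R u (w * cs.simple i)
        + X * R (u * cs.simple i) (w * cs.simple i)))

/-- The defining properties of the family of `R̃`-polynomials. -/
def IsRTildeFamily {B W : Type*} [Group W] {M : CoxeterMatrix B}
    (cs : CoxeterSystem M W) (Rt : W → W → Polynomial ℕ) : Prop :=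
  (∀ u w, ¬ BruhatLE cs u w → Rt u w = 0) ∧
  (∀ w, Rt w w = 1) ∧
  (∀ u w, ∀ i : B, cs.length (w * cs.simple i) < cs.length w →
    (cs.length (u * cs.simple i) < cs.length u →
      Rt u w = Rt (u * cs.simple i) (w * cs.simple i)) ∧
    (cs.length u < cs.length (u * cs.simple i) →
      Rt u w = X * Rt u (w * cs.simple i)
        + Rt (u * cs.simple i) (w * cs.simple i)))

/-- Dihedral polynomials. -/
noncomputable def dPoly : ℕ → Polynomial ℤ
  | 0 => 1
  | 1 => X
  | 2 => X ^ 2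
  | (n + 3) => X * dPoly (n + 2) + (X + 1) * dPoly (n + 1)

/-- The degree of a vertex `x` in the Bruhat graph on the vertex set `V`:
the total number of incident edges (incoming plus outgoing). -/
noncomputable def degIn {B W : Type*} [Group W] {M : CoxeterMatrix B}
    (cs : CoxeterSystem M W) (V : Set W) (x : W) : ℕ :=
  Nat.card {y : W // y ∈ V ∧ (BruhatEdge cs x y ∨ BruhatEdge cs y x)}

/-- The Bruhat graph on the vertex set `V` is regular: all vertices have the same degree. -/
def IsRegularOn {B W : Type*} [Group W] {M : CoxeterMatrix B}
    (cs : CoxeterSystem M W) (V : Set W) : Prop :=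
  ∀ x ∈ V, ∀ y ∈ V, degIn cs V x = degIn cs V y

/-- Jacobsthal numbers. -/
def jacobsthal : ℕ → ℤ
  | 0 => 0
  | 1 => 1
  | (n + 2) => jacobsthal (n + 1) + 2 * jacobsthal n

/-
At `q = 2` the recursion for `R`-polynomials along a right descent `s` of `w` reads
`R_{u,w}(2) = R_{u,ws}(2) + 2 R_{us,ws}(2)` and
`R'_{u,w}(2) = R_{u,ws}(2) + R'_{u,ws}(2) + R_{us,ws}(2) + 2 R'_{us,ws}(2)` when `u < us`
(and `R_{u,w} = R_{us,ws}` when `us < u`), which is exactly the recursion satisfied by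
`d_n(1)` and `d_n'(1)`. The lifting property of Bruhat order ensures that the pairs occurring
on the right are again comparable, with length differences `n - 1` and `n - 2`, so the bounds
propagate by induction on `ℓ(w)`; a term `R_{us,ws}` with `us ≰ ws` vanishes, and the upper
bounds survive because `d_n(1)` and `d_n'(1)` grow fast enough.

The lifting property follows from the subword property, which rests on the strong exchange
condition; the latter is proved with Tits' action of `W` on `W × ZMod 2`, whose second
component counts, modulo 2, the occurrences of a reflection in the inversion sequence of any
word for `w`.
-/

theorem mul_mul_inv_eq_iff {G : Type*} [Group G] (a t x : G) :
    a * t * a⁻¹ = x ↔ t = a⁻¹ * x * a := by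
  constructor <;> rintro rfl <;> group

namespace CoxeterSystem

open List
open scoped Classical

variable {B W : Type*} [Group W] {M : CoxeterMatrix B} (cs : CoxeterSystem M W)

local prefix:100 "s" => cs.simple
local prefix:100 "π" => cs.wordProd
local prefix:100 "ℓ" => cs.length

theorem simple_mul_mul_simple_eq_iff (i : B) (t x : W) :
    s i * t * s i = x ↔ t = s i * x * s i := by
  simpa using mul_mul_inv_eq_iff (s i) t x

noncomputable def reflectionPerm (i : B) : Equiv.Perm (W × ZMod 2) :=
  Function.Involutive.toPerm (fun p => (s i * p.1 * s i, p.2 + if p.1 = s i then 1 else 0)) <| by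
    rintro ⟨t, e⟩
    have hconj : s i * t * s i = s i ↔ t = s i := by
      rw [simple_mul_mul_simple_eq_iff]; simp
    refine Prod.ext (by simp [mul_assoc]) ?_
    dsimp only
    rw [hconj, add_assoc, CharTwo.add_self_eq_zero, add_zero]

theorem reflectionPerm_apply (i : B) (t : W) (e : ZMod 2) :
    cs.reflectionPerm i (t, e) = (s i * t * s i, e + if t = s i then 1 else 0) := rfl

theorem conj_pow_eq_simple_mul_pow_iff (i j : B) (n r : ℕ) (t : W) :
    (s i * s j) ^ n * t * ((s i * s j) ^ n)⁻¹ = s j * (s i * s j) ^ r ↔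
      t = s j * (s i * s j) ^ (2 * n + r) := by
  have hinv : ((s i * s j) ^ n)⁻¹ * s j = s j * (s i * s j) ^ n := by
    have : s j * (s i * s j) ^ n * (s j)⁻¹ = ((s i * s j) ^ n)⁻¹ := by
      rw [← conj_pow, ← inv_pow]; simp [mul_assoc]
    rw [← this]; simp [mul_assoc]
  rw [mul_mul_inv_eq_iff, ← mul_assoc, hinv, mul_assoc, mul_assoc, ← pow_add, ← pow_add,
    show n + (r + n) = 2 * n + r by ring]

theorem reflectionPerm_mul_pow_apply (i j : B) (n : ℕ) (t : W) (e : ZMod 2) :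
    ((cs.reflectionPerm i * cs.reflectionPerm j) ^ n) (t, e) =
      ((s i * s j) ^ n * t * ((s i * s j) ^ n)⁻¹,
        e + ∑ k ∈ Finset.range (2 * n), if t = s j * (s i * s j) ^ k then 1 else 0) := by
  induction n with
  | zero => simp
  | succ n ih =>
    have hsi (x : W) : s j * x * s j = s i ↔ x = s j * (s i * s j) ^ 1 := by
      rw [simple_mul_mul_simple_eq_iff, pow_one, mul_assoc]
    have hsj := cs.conj_pow_eq_simple_mul_pow_iff i j n 0 t
    rw [pow_zero, mul_one, add_zero] at hsj
    rw [pow_succ', Equiv.Perm.mul_apply, ih, Equiv.Perm.mul_apply, reflectionPerm_apply,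
      reflectionPerm_apply, if_congr (hsi _) rfl rfl, if_congr hsj rfl rfl,
      if_congr (conj_pow_eq_simple_mul_pow_iff ..) rfl rfl]
    refine Prod.ext ?_ ?_
    · simp only [pow_succ', mul_inv_rev, cs.inv_simple, mul_assoc]
    · rw [show 2 * (n + 1) = 2 * n + 1 + 1 by ring, Finset.sum_range_succ, Finset.sum_range_succ]
      simp only [add_assoc]

theorem isLiftable_reflectionPerm : M.IsLiftable cs.reflectionPerm := by
  intro i j
  ext ⟨t, e⟩ : 1
  -- with `m = M i j`, the `2m` summands are the `m` values `[t = s j (s i s j)^k]`, each twice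
  rw [reflectionPerm_mul_pow_apply, cs.simple_mul_simple_pow, two_mul, Finset.sum_range_add]
  simp only [pow_add, cs.simple_mul_simple_pow, one_mul, inv_one, mul_one,
    CharTwo.add_self_eq_zero, add_zero, Equiv.Perm.one_apply]

noncomputable def reflectionAction : W →* Equiv.Perm (W × ZMod 2) :=
  cs.lift ⟨cs.reflectionPerm, cs.isLiftable_reflectionPerm⟩

noncomputable def inversionParity (w t : W) : ZMod 2 := (cs.reflectionAction w (t, 0)).2

theorem reflectionAction_simple (i : B) : cs.reflectionAction (s i) = cs.reflectionPerm i :=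
  cs.lift_apply_simple cs.isLiftable_reflectionPerm i

theorem reflectionAction_apply (w t : W) (e : ZMod 2) :
    cs.reflectionAction w (t, e) = (w * t * w⁻¹, e + cs.inversionParity w t) := by
  induction w using cs.simple_induction_left generalizing e with
  | one => simp [inversionParity]
  | mul_simple_left w i ih =>
    have key (e : ZMod 2) : cs.reflectionAction (s i * w) (t, e) =
        (s i * (w * t * w⁻¹) * s i,
          e + cs.inversionParity w t + if w * t * w⁻¹ = s i then 1 else 0) := by
      rw [map_mul, Equiv.Perm.mul_apply, ih, reflectionAction_simple, reflectionPerm_apply]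
    have hpar : cs.inversionParity (s i * w) t =
        cs.inversionParity w t + if w * t * w⁻¹ = s i then 1 else 0 := by
      show (cs.reflectionAction (s i * w) (t, 0)).2 = _
      rw [key, zero_add]
    rw [key, hpar, add_assoc]
    simp [mul_assoc]

theorem inversionParity_mul (w v t : W) :
    cs.inversionParity (w * v) t =
      cs.inversionParity v t + cs.inversionParity w (v * t * v⁻¹) := by
  rw [inversionParity, map_mul, Equiv.Perm.mul_apply, reflectionAction_apply,
    reflectionAction_apply, zero_add]

theorem inversionParity_one (t : W) : cs.inversionParity 1 t = 0 := by
  simp [inversionParity]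

theorem inversionParity_simple (i : B) (t : W) :
    cs.inversionParity (s i) t = if t = s i then 1 else 0 := by
  rw [inversionParity, reflectionAction_simple, reflectionPerm_apply, zero_add]

theorem IsReflection.inversionParity_self {t : W} (ht : cs.IsReflection t) :
    cs.inversionParity t t = 1 := by
  obtain ⟨v, i, rfl⟩ := ht
  have hconj : v⁻¹ * (v * s i * v⁻¹) * v⁻¹⁻¹ = s i := by group
  have hinv : cs.inversionParity v⁻¹ (v * s i * v⁻¹) = cs.inversionParity v (s i) := by
    have := cs.inversionParity_mul v v⁻¹ (v * s i * v⁻¹)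
    rwa [mul_inv_cancel, inversionParity_one, hconj, eq_comm, CharTwo.add_eq_zero] at this
  rw [inversionParity_mul, hinv, hconj, inversionParity_mul, inversionParity_simple, if_pos rfl,
    mul_inv_cancel_right, add_left_comm, CharTwo.add_self_eq_zero, add_zero]

theorem count_rightInvSeq (ω : List B) (t : W) :
    ((cs.rightInvSeq ω).count t : ZMod 2) = cs.inversionParity (π ω) t := by
  induction ω with
  | nil => simp [inversionParity_one]
  | cons i ω ih =>
    have hiff : (π ω)⁻¹ * s i * π ω = t ↔ π ω * t * (π ω)⁻¹ = s i := by
      rw [mul_mul_inv_eq_iff, eq_comm]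
    rw [rightInvSeq, count_cons, cs.wordProd_cons, inversionParity_mul, inversionParity_simple,
      ← ih]
    by_cases h : π ω * t * (π ω)⁻¹ = s i <;> simp [h, hiff]

theorem mem_rightInvSeq_of_inversionParity_eq_one {ω : List B} {t : W}
    (h : cs.inversionParity (π ω) t = 1) : t ∈ cs.rightInvSeq ω := by
  by_contra hmem
  rw [← count_rightInvSeq, count_eq_zero.mpr hmem] at h
  exact zero_ne_one h

theorem IsRightInversion.inversionParity_eq_one {w t : W} (h : cs.IsRightInversion w t) :
    cs.inversionParity w t = 1 := by
  by_contra hne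
  have h0 : cs.inversionParity w t = 0 := (by decide : ∀ x : ZMod 2, x ≠ 1 → x = 0) _ hne
  have h1 : cs.inversionParity (w * t) t = 1 := by
    rw [inversionParity_mul, h.1.inversionParity_self, h.1.inv, mul_assoc, h.1.mul_self, mul_one,
      h0, add_zero]
  obtain ⟨ω, hω, hωt⟩ := cs.exists_isReduced (w * t)
  rw [hωt] at h1
  have hlt := (cs.isRightInversion_of_mem_rightInvSeq hω
    (cs.mem_rightInvSeq_of_inversionParity_eq_one h1)).2
  rw [← hωt, mul_assoc, h.1.mul_self, mul_one] at hlt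
  exact absurd h.2 (not_lt.mpr hlt.le)

theorem mem_rightInvSeq_of_isRightInversion {ω : List B} {t : W}
    (h : cs.IsRightInversion (π ω) t) : t ∈ cs.rightInvSeq ω :=
  cs.mem_rightInvSeq_of_inversionParity_eq_one h.inversionParity_eq_one

theorem exists_wordProd_mul_eq_eraseIdx {ω : List B} {t : W}
    (h : cs.IsRightInversion (π ω) t) : ∃ j < ω.length, π ω * t = π (ω.eraseIdx j) := by
  obtain ⟨j, hj, rfl⟩ := mem_iff_getElem.mp (cs.mem_rightInvSeq_of_isRightInversion h)
  rw [cs.length_rightInvSeq] at hj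
  exact ⟨j, hj, by rw [← cs.wordProd_mul_getD_rightInvSeq, getD_eq_getElem]⟩

theorem wordProd_append_singleton (ω : List B) (i : B) : π (ω ++ [i]) = π ω * s i := by
  rw [cs.wordProd_append, cs.wordProd_singleton]

theorem isReduced_append_singleton_iff (ω : List B) (i : B) :
    cs.IsReduced (ω ++ [i]) ↔ cs.IsReduced ω ∧ ℓ (π ω) < ℓ (π ω * s i) := by
  rw [IsReduced, IsReduced, wordProd_append_singleton, length_append, length_singleton]
  have := cs.length_wordProd_le ω
  have := cs.length_mul_simple (π ω) i
  omega

theorem exists_isReduced_sublist (ω : List B) :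
    ∃ ρ, ρ <+ ω ∧ cs.IsReduced ρ ∧ π ρ = π ω := by
  induction ω using reverseRecOn with
  | nil => exact ⟨[], Sublist.refl _, by simp [IsReduced], rfl⟩
  | append_singleton ω i ih =>
    obtain ⟨ρ, hsub, hρ, hπ⟩ := ih
    rw [wordProd_append_singleton, ← hπ]
    by_cases hi : ℓ (π ρ) < ℓ (π ρ * s i)
    · exact ⟨ρ ++ [i], hsub.append (Sublist.refl _),
        (cs.isReduced_append_singleton_iff ρ i).mpr ⟨hρ, hi⟩, cs.wordProd_append_singleton ρ i⟩
    · obtain ⟨j, hj, hje⟩ := cs.exists_wordProd_mul_eq_eraseIdx (ω := ρ)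
        ⟨cs.isReflection_simple i, lt_of_le_of_ne (not_lt.mp hi) (cs.length_mul_simple_ne _ i)⟩
      refine ⟨ρ.eraseIdx j, ((eraseIdx_sublist ρ j).trans hsub).trans (sublist_append_left ω [i]),
        ?_, hje.symm⟩
      have := cs.length_mul_simple (π ρ) i
      rw [IsReduced, ← hje, length_eraseIdx_of_lt hj]
      rw [hρ.eq] at this hi
      omega

end CoxeterSystem

section Bruhat

open CoxeterSystem List

variable {B W : Type*} [Group W] {M : CoxeterMatrix B} {cs : CoxeterSystem M W}

local prefix:100 "s" => cs.simple
local prefix:100 "π" => cs.wordProd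
local prefix:100 "ℓ" => cs.length

theorem BruhatEdge.length_lt {u v : W} (h : BruhatEdge cs u v) : ℓ u < ℓ v :=
  h.choose_spec.2.2

theorem bruhatEdge_mul_simple {u : W} {i : B} (h : ℓ u < ℓ (u * s i)) :
    BruhatEdge cs u (u * s i) :=
  ⟨s i, cs.isReflection_simple i, rfl, h⟩

theorem bruhatEdge_mul_simple' {u : W} {i : B} (h : ℓ (u * s i) < ℓ u) :
    BruhatEdge cs (u * s i) u :=
  ⟨s i, cs.isReflection_simple i, by simp [mul_assoc], h⟩

theorem BruhatLE.refl (w : W) : BruhatLE cs w w := Relation.ReflTransGen.refl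

theorem BruhatLE.length_le {u w : W} (h : BruhatLE cs u w) : ℓ u ≤ ℓ w := by
  induction h with
  | refl => exact le_rfl
  | tail _ hedge ih => exact ih.trans hedge.length_lt.le

theorem BruhatLE.eq_of_length_le {u w : W} (h : BruhatLE cs u w) (hl : ℓ w ≤ ℓ u) : u = w := by
  rcases Relation.ReflTransGen.cases_tail h with rfl | ⟨c, hc, hedge⟩
  · rfl
  · exact absurd hl (not_le.mpr ((BruhatLE.length_le hc).trans_lt hedge.length_lt))

theorem BruhatLE.length_lt_of_ne {u w : W} (h : BruhatLE cs u w) (hne : u ≠ w) : ℓ u < ℓ w :=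
  lt_of_le_of_ne h.length_le fun hl => hne (h.eq_of_length_le hl.ge)

theorem BruhatLE.exists_isReduced_sublist {u w : W} (h : BruhatLE cs u w) {ω : List B}
    (hω : cs.IsReduced ω) (hπ : π ω = w) : ∃ ρ, ρ <+ ω ∧ cs.IsReduced ρ ∧ π ρ = u := by
  induction h using Relation.ReflTransGen.head_induction_on with
  | refl => exact ⟨ω, Sublist.refl _, hω, hπ⟩
  | @head u c hedge _ ih =>
    obtain ⟨ρ, hsub, hρ, rfl⟩ := ih
    obtain ⟨t, ht, hc, hlt⟩ := hedge
    have hu : π ρ * t = u := by rw [hc, mul_assoc, ht.mul_self, mul_one]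
    obtain ⟨j, -, hj⟩ := cs.exists_wordProd_mul_eq_eraseIdx (ω := ρ) ⟨ht, hu ▸ hlt⟩
    obtain ⟨ρ', hsub', hρ', hπ'⟩ := cs.exists_isReduced_sublist (ρ.eraseIdx j)
    exact ⟨ρ', hsub'.trans ((ρ.eraseIdx_sublist j).trans hsub), hρ', by rw [hπ', ← hj, hu]⟩

theorem BruhatLE.exists_isReduced_sublist_of_mul_simple_lt {u w : W} {i : B}
    (h : BruhatLE cs u w) (hw : ℓ (w * s i) < ℓ w) :
    ∃ ω, cs.IsReduced (ω ++ [i]) ∧ π ω = w * s i ∧ ∃ ρ, ρ <+ ω ∧ cs.IsReduced ρ ∧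
      (π ρ = u ∨ (π ρ = u * s i ∧ ℓ (u * s i) < ℓ u)) := by
  obtain ⟨ω, hω, hωw⟩ := cs.exists_isReduced (w * s i)
  have hωi : cs.IsReduced (ω ++ [i]) := by
    rw [isReduced_append_singleton_iff, ← hωw]
    exact ⟨hω, by simpa using hw⟩
  have hπ : π (ω ++ [i]) = w := by simp [wordProd_append_singleton, ← hωw]
  obtain ⟨ρ, hsub, hρ, rfl⟩ := h.exists_isReduced_sublist hωi hπ
  obtain ⟨ρ, ρ₂, rfl, hsub, h₂⟩ := sublist_append_iff.mp hsub
  refine ⟨ω, hωi, hωw.symm, ρ, hsub, ?_⟩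
  rcases sublist_singleton.mp h₂ with rfl | rfl
  · rw [append_nil] at hρ ⊢
    exact ⟨hρ, Or.inl rfl⟩
  · obtain ⟨hρ', hasc⟩ := (cs.isReduced_append_singleton_iff ρ i).mp hρ
    refine ⟨hρ', Or.inr ⟨by simp [wordProd_append_singleton, mul_assoc], ?_⟩⟩
    simpa [wordProd_append_singleton, mul_assoc] using hasc

variable (cs) in
/-- The subword property is proved by induction on `n`, simultaneously with
`SubwordPropertyUpTo.mul_simple_le_mul_simple`. -/
def SubwordPropertyUpTo (n : ℕ) : Prop :=
  ∀ ω ρ : List B, cs.IsReduced ω → ω.length ≤ n → ρ <+ ω → cs.IsReduced ρ →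
    BruhatLE cs (π ρ) (π ω)

theorem SubwordPropertyUpTo.mul_simple_le_mul_simple {n : ℕ} (hS : SubwordPropertyUpTo cs n)
    {a b : W} {i : B} (hab : BruhatLE cs a b) (ha : ℓ a < ℓ (a * s i))
    (hb : ℓ b < ℓ (b * s i)) (hbn : ℓ b ≤ n) : BruhatLE cs (a * s i) (b * s i) := by
  induction hab with
  | refl => exact .refl _
  | @tail c b hac hcb ih =>
    obtain ⟨t, ht, rfl, hlt⟩ := hcb
    have hb' : BruhatEdge cs (c * t) (c * t * s i) := bruhatEdge_mul_simple hb
    rcases cs.length_mul_simple c i with hc | hc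
    · refine (ih (by omega) (by omega)).tail ⟨s i * t * s i, ?_, by simp [mul_assoc], by omega⟩
      simpa using ht.conj (s i)
    · -- `c` has a reduced word ending in `s i`, and `a` a reduced subword of it avoiding
      -- the last letter; appending `s i` to both gives `a * s i ≤ c`
      obtain ⟨ω, hωi, hω, ρ, hsub, hρ, hρa⟩ :=
        BruhatLE.exists_isReduced_sublist_of_mul_simple_lt hac (i := i) (by omega)
      have hρa : π ρ = a := hρa.resolve_right (fun h => by omega)
      have hρi : cs.IsReduced (ρ ++ [i]) :=
        (cs.isReduced_append_singleton_iff ρ i).mpr ⟨hρ, hρa ▸ ha⟩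
      have hπc : π (ω ++ [i]) = c := by simp [wordProd_append_singleton, hω, mul_assoc]
      have hac' := hS (ω ++ [i]) (ρ ++ [i]) hωi (by rw [← hωi.eq, hπc]; omega)
        (hsub.append (Sublist.refl _)) hρi
      rw [hπc, wordProd_append_singleton, hρa] at hac'
      exact (hac'.tail ⟨t, ht, rfl, hlt⟩).tail hb'

theorem SubwordPropertyUpTo.succ {n : ℕ} (hS : SubwordPropertyUpTo cs n) :
    SubwordPropertyUpTo cs (n + 1) := by
  intro ω ρ hω hlen hsub hρ
  rcases eq_nil_or_concat' ω with rfl | ⟨ω, i, rfl⟩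
  · rw [sublist_nil.mp hsub]
    exact .refl _
  obtain ⟨hω', hasc⟩ := (cs.isReduced_append_singleton_iff ω i).mp hω
  have hlen' : ω.length ≤ n := by simpa using hlen
  obtain ⟨ρ, ρ₂, rfl, h₁, h₂⟩ := sublist_append_iff.mp hsub
  rw [wordProd_append_singleton]
  rcases sublist_singleton.mp h₂ with rfl | rfl
  · rw [append_nil] at hρ ⊢
    exact (hS ω ρ hω' hlen' h₁ hρ).tail (bruhatEdge_mul_simple hasc)
  · obtain ⟨hρ', hρasc⟩ := (cs.isReduced_append_singleton_iff ρ i).mp hρ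
    rw [wordProd_append_singleton]
    exact hS.mul_simple_le_mul_simple (hS ω ρ hω' hlen' h₁ hρ') hρasc hasc (hω'.eq ▸ hlen')

theorem subwordPropertyUpTo (n : ℕ) : SubwordPropertyUpTo cs n := by
  induction n with
  | zero =>
    intro ω ρ _ hlen hsub _
    obtain rfl := length_eq_zero_iff.mp (Nat.le_zero.mp hlen)
    rw [sublist_nil.mp hsub]
    exact .refl _
  | succ n ih => exact ih.succ

theorem bruhatLE_wordProd_of_sublist {ω ρ : List B} (hω : cs.IsReduced ω)
    (hρ : cs.IsReduced ρ) (h : ρ <+ ω) : BruhatLE cs (π ρ) (π ω) :=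
  subwordPropertyUpTo ω.length ω ρ hω le_rfl h hρ

theorem BruhatLE.le_mul_simple {u w : W} {i : B} (h : BruhatLE cs u w)
    (hw : ℓ (w * s i) < ℓ w) (hu : ℓ u < ℓ (u * s i)) : BruhatLE cs u (w * s i) := by
  obtain ⟨ω, hωi, hω, ρ, hsub, hρ, hρu⟩ := h.exists_isReduced_sublist_of_mul_simple_lt hw
  rw [← hρu.resolve_right (fun h => by omega), ← hω]
  exact bruhatLE_wordProd_of_sublist ((cs.isReduced_append_singleton_iff ω i).mp hωi).1 hρ hsub

theorem BruhatLE.mul_simple_le_mul_simple {u w : W} {i : B} (h : BruhatLE cs u w)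
    (hw : ℓ (w * s i) < ℓ w) (hu : ℓ (u * s i) < ℓ u) : BruhatLE cs (u * s i) (w * s i) := by
  obtain ⟨ω, hωi, hω, ρ, hsub, hρ, hρu⟩ := h.exists_isReduced_sublist_of_mul_simple_lt hw
  have hle := bruhatLE_wordProd_of_sublist
    ((cs.isReduced_append_singleton_iff ω i).mp hωi).1 hρ hsub
  rw [hω] at hle
  rcases hρu with hρu | ⟨hρu, -⟩
  · rw [hρu] at hle
    exact Relation.ReflTransGen.head (bruhatEdge_mul_simple' hu) hle
  · rwa [hρu] at hle

end Bruhat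

section Dihedral

open Polynomial

noncomputable def dEval (n : ℕ) : ℤ := (dPoly n).eval 1

noncomputable def dDerivEval (n : ℕ) : ℤ := (derivative (dPoly n)).eval 1

theorem dEval_zero : dEval 0 = 1 := by simp [dEval, dPoly]
theorem dEval_one : dEval 1 = 1 := by simp [dEval, dPoly]
theorem dEval_two : dEval 2 = 1 := by simp [dEval, dPoly]
theorem dDerivEval_zero : dDerivEval 0 = 0 := by simp [dDerivEval, dPoly]
theorem dDerivEval_one : dDerivEval 1 = 1 := by simp [dDerivEval, dPoly]
theorem dDerivEval_two : dDerivEval 2 = 2 := by simp [dDerivEval, dPoly]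

theorem dEval_add_three (n : ℕ) : dEval (n + 3) = dEval (n + 2) + 2 * dEval (n + 1) := by
  simp only [dEval, dPoly, eval_add, eval_mul, eval_X, eval_one]
  ring

theorem dDerivEval_add_three (n : ℕ) :
    dDerivEval (n + 3) =
      dEval (n + 2) + dDerivEval (n + 2) + dEval (n + 1) + 2 * dDerivEval (n + 1) := by
  simp only [dEval, dDerivEval, dPoly, derivative_add, derivative_mul, derivative_X, eval_add,
    eval_mul, eval_X, eval_one, derivative_one, eval_zero]
  ring

theorem one_le_dEval : ∀ n, 1 ≤ dEval n
  | 0 => dEval_zero.ge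
  | 1 => dEval_one.ge
  | 2 => dEval_two.ge
  | n + 3 => by linarith [dEval_add_three n, one_le_dEval (n + 2), one_le_dEval (n + 1)]

theorem dDerivEval_nonneg : ∀ n, 0 ≤ dDerivEval n
  | 0 => dDerivEval_zero.ge
  | 1 => by simp [dDerivEval_one]
  | 2 => by simp [dDerivEval_two]
  | n + 3 => by
    linarith [dDerivEval_add_three n, one_le_dEval (n + 2), one_le_dEval (n + 1),
      dDerivEval_nonneg (n + 2), dDerivEval_nonneg (n + 1)]

theorem dEval_le_dEval_succ : ∀ n, dEval n ≤ dEval (n + 1)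
  | 0 => by simp [dEval_zero, dEval_one]
  | 1 => by simp [dEval_one, dEval_two]
  | n + 2 => by linarith [dEval_add_three n, one_le_dEval (n + 1)]

theorem dEval_add_dDerivEval_le : ∀ n, dEval n + dDerivEval n ≤ dDerivEval (n + 1)
  | 0 => by simp [dEval_zero, dDerivEval_zero, dDerivEval_one]
  | 1 => by simp [dEval_one, dDerivEval_one, dDerivEval_two]
  | n + 2 => by
    linarith [dDerivEval_add_three n, one_le_dEval (n + 1), dDerivEval_nonneg (n + 1)]

theorem jacobsthal_add_two (n : ℕ) :
    jacobsthal (n + 2) = jacobsthal (n + 1) + 2 * jacobsthal n :=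
  rfl

theorem three_mul_jacobsthal (n : ℕ) : 3 * jacobsthal n = 2 ^ n - (-1) ^ n := by
  induction n using Nat.twoStepInduction with
  | zero => simp [jacobsthal]
  | one => simp [jacobsthal]
  | more n h₀ h₁ =>
    rw [jacobsthal_add_two]
    linear_combination h₁ + 2 * h₀

theorem dEval_succ (n : ℕ) : dEval (n + 1) = jacobsthal (n + 1) := by
  induction n using Nat.twoStepInduction with
  | zero => simp [dEval_one, jacobsthal]
  | one => simp [dEval_two, jacobsthal]
  | more n h₀ h₁ => rw [dEval_add_three, h₀, h₁, jacobsthal_add_two (n + 1)]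

theorem nine_mul_dDerivEval_succ (n : ℕ) :
    9 * dDerivEval (n + 1) = 2 * (2 ^ (n + 1) - (-1) ^ (n + 1)) + 3 * (n + 1) * 2 ^ n := by
  induction n using Nat.twoStepInduction with
  | zero => simp [dDerivEval_one]
  | one => simp [dDerivEval_two]
  | more n h₀ h₁ =>
    rw [dDerivEval_add_three, dEval_succ, dEval_succ]
    push_cast at h₁ ⊢
    linear_combination h₁ + 2 * h₀ + 3 * three_mul_jacobsthal (n + 2) +
      3 * three_mul_jacobsthal (n + 1)

end Dihedral

section RPolynomial

open Polynomial

def IsDihedrallyBounded (n : ℕ) (p : ℤ[X]) : Prop :=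
  (1 ≤ p.eval 2 ∧ p.eval 2 ≤ dEval n) ∧
    ((n : ℤ) ≤ (derivative p).eval 2 ∧ (derivative p).eval 2 ≤ dDerivEval n)

theorem isDihedrallyBounded_zero_one : IsDihedrallyBounded 0 1 := by
  simp [IsDihedrallyBounded, dEval_zero, dDerivEval_zero]

theorem IsDihedrallyBounded.X_sub_one_mul {n : ℕ} {p : ℤ[X]} (hp : IsDihedrallyBounded n p) :
    IsDihedrallyBounded (n + 1) ((X - 1) * p) := by
  obtain ⟨⟨h₁, h₂⟩, h₃, h₄⟩ := hp
  simp only [IsDihedrallyBounded, derivative_mul, derivative_sub, derivative_X, derivative_one,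
    eval_add, eval_mul, eval_sub, eval_X, eval_one, eval_zero]
  push_cast
  refine ⟨⟨by linarith, by linarith [dEval_le_dEval_succ n]⟩, by linarith,
    by linarith [dEval_add_dDerivEval_le n]⟩

theorem IsDihedrallyBounded.X_sub_one_mul_add_X_mul {n : ℕ} {p q : ℤ[X]}
    (hp : IsDihedrallyBounded (n + 2) p) (hq : IsDihedrallyBounded (n + 1) q) :
    IsDihedrallyBounded (n + 3) ((X - 1) * p + X * q) := by
  obtain ⟨⟨hp₁, hp₂⟩, hp₃, hp₄⟩ := hp
  obtain ⟨⟨hq₁, hq₂⟩, hq₃, hq₄⟩ := hq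
  simp only [IsDihedrallyBounded, derivative_add, derivative_mul, derivative_sub, derivative_X,
    derivative_one, eval_add, eval_mul, eval_sub, eval_X, eval_one, eval_zero,
    dEval_add_three, dDerivEval_add_three]
  push_cast at hp₃ hq₃ ⊢
  refine ⟨⟨by linarith, by linarith⟩, by linarith, by linarith⟩

variable {B W : Type*} [Group W] {M : CoxeterMatrix B} {cs : CoxeterSystem M W}

local prefix:100 "s" => cs.simple
local prefix:100 "ℓ" => cs.length

theorem IsRFamily.isDihedrallyBounded {R : W → W → ℤ[X]} (hR : IsRFamily cs R) {u w : W}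
    (huw : BruhatLE cs u w) : IsDihedrallyBounded (ℓ w - ℓ u) (R u w) := by
  obtain ⟨hR₀, hR₁, hRrec⟩ := id hR
  rcases eq_or_ne u w with rfl | hne
  · rw [hR₁, Nat.sub_self]
    exact isDihedrallyBounded_zero_one
  have hlt := huw.length_lt_of_ne hne
  obtain ⟨i, hi⟩ := cs.exists_rightDescent_of_ne_one (w := w) (by rintro rfl; simp at hlt)
  have hwi := cs.isRightDescent_iff.mp hi
  by_cases hui : cs.IsRightDescent u i
  · rw [(hRrec u w i hi).1 hui, show ℓ w - ℓ u = ℓ (w * s i) - ℓ (u * s i) by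
      have := cs.isRightDescent_iff.mp hui; omega]
    exact IsRFamily.isDihedrallyBounded hR (huw.mul_simple_le_mul_simple hi hui)
  have hui := cs.not_isRightDescent_iff.mp hui
  rw [(hRrec u w i hi).2 (by omega)]
  have hbd := IsRFamily.isDihedrallyBounded hR (huw.le_mul_simple hi (by omega))
  by_cases hle : BruhatLE cs (u * s i) (w * s i)
  · have hbd' := IsRFamily.isDihedrallyBounded hR hle
    have := hle.length_lt_of_ne fun h => hne (mul_right_cancel h)
    obtain ⟨k, hk⟩ : ∃ k, ℓ w - ℓ u = k + 3 := ⟨ℓ w - ℓ u - 3, by omega⟩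
    rw [show ℓ (w * s i) - ℓ u = k + 2 by omega] at hbd
    rw [show ℓ (w * s i) - ℓ (u * s i) = k + 1 by omega] at hbd'
    rw [hk]
    exact hbd.X_sub_one_mul_add_X_mul hbd'
  · rw [hR₀ _ _ hle, mul_zero, add_zero, show ℓ w - ℓ u = ℓ (w * s i) - ℓ u + 1 by omega]
    exact hbd.X_sub_one_mul
termination_by cs.length w
decreasing_by all_goals omega

end RPolynomial

theorem stmt19_general {B W : Type*} [Group W] {M : CoxeterMatrix B}
    (cs : CoxeterSystem M W)
    (R : W → W → Polynomial ℤ) (hR : IsRFamily cs R)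
    (u w : W) (huw : BruhatLE cs u w)
    (n : ℕ) (hn : cs.length w - cs.length u = n) (hn1 : 1 ≤ n) :
    (1 ≤ (R u w).eval 2 ∧ (R u w).eval 2 ≤ (dPoly n).eval 1) ∧
    ((n : ℤ) ≤ (Polynomial.derivative (R u w)).eval 2 ∧
      (Polynomial.derivative (R u w)).eval 2 ≤ (Polynomial.derivative (dPoly n)).eval 1) ∧
    3 * (dPoly n).eval 1 = 2 ^ n - (-1 : ℤ) ^ n ∧
    (dPoly n).eval 1 = jacobsthal n ∧
    9 * (Polynomial.derivative (dPoly n)).eval 1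
      = 2 * (2 ^ n - (-1 : ℤ) ^ n) + 3 * n * 2 ^ (n - 1) := by
  obtain ⟨k, rfl⟩ := Nat.exists_eq_add_of_le' hn1
  obtain ⟨hval, hderiv⟩ := hn ▸ hR.isDihedrallyBounded huw
  refine ⟨hval, hderiv, ?_, dEval_succ k, ?_⟩
  · exact (congrArg (3 * ·) (dEval_succ k)).trans (three_mul_jacobsthal _)
  · simpa [dDerivEval] using nine_mul_dDerivEval_succ k

theorem stmt19 {B W : Type*} [Group W] [Finite W] {M : CoxeterMatrix B}
    (cs : CoxeterSystem M W)
    (R : W → W → Polynomial ℤ) (hR : IsRFamily cs R)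
    (u w : W) (huw : BruhatLE cs u w)
    (n : ℕ) (hn : cs.length w - cs.length u = n) (hn1 : 1 ≤ n) :
    (1 ≤ (R u w).eval 2 ∧ (R u w).eval 2 ≤ (dPoly n).eval 1) ∧
    ((n : ℤ) ≤ (Polynomial.derivative (R u w)).eval 2 ∧
      (Polynomial.derivative (R u w)).eval 2 ≤ (Polynomial.derivative (dPoly n)).eval 1) ∧
    3 * (dPoly n).eval 1 = 2 ^ n - (-1 : ℤ) ^ n ∧
    (dPoly n).eval 1 = jacobsthal n ∧
    9 * (Polynomial.derivative (dPoly n)).eval 1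
      = 2 * (2 ^ n - (-1 : ℤ) ^ n) + 3 * n * 2 ^ (n - 1) :=
  stmt19_general cs R hR u w huw n hn hn1
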